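/- arXiv:1506.03349 — 3 statements merged into one kernel-verified Lean document; each statement's English description precedes it below -/
import Mathlib

section
/- (Heavy sets are non-displaceable, abstract form) Let ζ : C(M) → ℝ be a partial quasi-state, i.e. satisfying monotonicity, additivity with constants, semi-homogeneity, and the vanishing property: ζ(F) = 0 whenever supp(F) is displaceable. If Y ⊆ M is a ζ-heavy closed set (ζ(H) ≤ sup_Y H for all H), then Y is not displaceable, in the sense that Y is not contained in any open set U for which every continuous function supported in U has ζ-value 0. Concretely: if Y ⊆ U open and every F with supp F ⊆ U satisfies ζ(F) = 0, then a contradiction arises; hence no such U containing Y can exist when Y ≠ ∅. -/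
/-- Heavy sets are non-displaceable (abstract form): if `ζ` is a partial quasi-state
(monotone, additive with constants, semi-homogeneous) on a compact Hausdorff space,
`Y` is a nonempty closed `ζ`-heavy set, and `U` is an open set containing `Y` on which
`ζ` vanishes (every continuous function supported in `U` has `ζ`-value `0`), then a
contradiction arises. -/
theorem heavy_not_displaceable
    (M : Type*) [TopologicalSpace M] [CompactSpace M] [T2Space M]
    (ζ : C(M, ℝ) → ℝ)
    (hmono : ∀ F G : C(M, ℝ), F ≤ G → ζ F ≤ ζ G)
    (hconst : ∀ (F : C(M, ℝ)) (α : ℝ), ζ (F + ContinuousMap.const M α) = ζ F + α)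
    (hhom : ∀ lam : ℝ, 0 ≤ lam → ∀ F : C(M, ℝ), ζ (lam • F) = lam * ζ F)
    (Y : Set M) (hYc : IsClosed Y) (hYne : Y.Nonempty)
    (hheavy : ∀ H : C(M, ℝ), ζ H ≤ sSup (H '' Y))
    (U : Set M) (hU : IsOpen U) (hYU : Y ⊆ U)
    (hnull : ∀ F : C(M, ℝ), tsupport F ⊆ U → ζ F = 0) :
    False := by
  obtain ⟨f, hfsupp, hf1, hf01⟩ :=
    exists_tsupport_one_of_isOpen_isClosed hU isClosed_closure.isCompact hYc hYU
  have hz : ζ (-f) = 0 := by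
    have : tsupport (-f) ⊆ U := by
      simpa [tsupport, Function.support_neg] using hfsupp
    exact hnull (-f) this
  have hsup : sSup ((-f : C(M,ℝ)) '' Y) = -1 := by
    have : (-f : C(M,ℝ)) '' Y = {-1} := by
      ext x
      simp only [Set.mem_image, Set.mem_singleton_iff]
      constructor
      · rintro ⟨y, hy, rfl⟩
        simp [hf1 hy]
      · rintro rfl
        exact ⟨hYne.choose, hYne.choose_spec, by simp [hf1 hYne.choose_spec]⟩
    rw [this, csSup_singleton]
  have := hheavy (-f)
  rw [hz, hsup] at this
  linarith
end

section
/- (Products of heavy sets are heavy, abstract form) Let M = M⁰ × M¹ be a product of compact spaces, and let ζ⁰, ζ¹, ζ be monotone, sup-norm-Lipschitz functionals on C(M⁰), C(M¹), C(M) respectively, satisfying ζ(F⁰ ⊕ F¹) = ζ⁰(F⁰) + ζ¹(F¹) for all split functions (F⁰ ⊕ F¹)(x,y) = F⁰(x) + F¹(y). If Y⁰ ⊆ M⁰ is ζ⁰-heavy and Y¹ ⊆ M¹ is ζ¹-heavy, then Y⁰ × Y¹ is ζ-heavy, i.e. ζ(H) ≤ sup_{Y⁰×Y¹} H for every H ∈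 C(M⁰ × M¹). -/
/-- Products of heavy sets are heavy (abstract form): if `ζ⁰, ζ¹, ζ` are monotone,
1-Lipschitz (sup norm) functionals compatible on split functions, and `Y⁰, Y¹` are
heavy for `ζ⁰, ζ¹` respectively, then `Y⁰ × Y¹` is heavy for `ζ`. -/
theorem product_of_heavy_is_heavy
    (M0 M1 : Type*) [MetricSpace M0] [CompactSpace M0] [Nonempty M0]
    [MetricSpace M1] [CompactSpace M1] [Nonempty M1]
    (ζ0 : C(M0, ℝ) → ℝ) (ζ1 : C(M1, ℝ) → ℝ) (ζ : C(M0 × M1, ℝ) → ℝ)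
    (hmono0 : ∀ F G : C(M0, ℝ), F ≤ G → ζ0 F ≤ ζ0 G)
    (hmono1 : ∀ F G : C(M1, ℝ), F ≤ G → ζ1 F ≤ ζ1 G)
    (hmono : ∀ F G : C(M0 × M1, ℝ), F ≤ G → ζ F ≤ ζ G)
    (hlip0 : ∀ F G : C(M0, ℝ), |ζ0 F - ζ0 G| ≤ ‖F - G‖)
    (hlip1 : ∀ F G : C(M1, ℝ), |ζ1 F - ζ1 G| ≤ ‖F - G‖)
    (hlip : ∀ F G : C(M0 × M1, ℝ), |ζ F - ζ G| ≤ ‖F - G‖)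
    (hsplit : ∀ (F0 : C(M0, ℝ)) (F1 : C(M1, ℝ)),
      ζ (F0.comp (ContinuousMap.fst) + F1.comp (ContinuousMap.snd)) = ζ0 F0 + ζ1 F1)
    (Y0 : Set M0) (hY0c : IsClosed Y0)
    (hY0 : ∀ H : C(M0, ℝ), (ζ0 H : EReal) ≤ ⨆ p : Y0, ((H p : ℝ) : EReal))
    (Y1 : Set M1) (hY1c : IsClosed Y1)
    (hY1 : ∀ H : C(M1, ℝ), (ζ1 H : EReal) ≤ ⨆ p : Y1, ((H p : ℝ) : EReal)) :
    ∀ H : C(M0 × M1, ℝ), (ζ H : EReal) ≤ ⨆ p : ↥(Y0 ×ˢ Y1), ((H p : ℝ) : EReal) := by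
  intro H
  -- Y0 and Y1 are nonempty
  have hY0ne : Y0.Nonempty := by
    by_contra h
    rw [Set.not_nonempty_iff_eq_empty] at h
    subst h
    have := hY0 0
    simp at this
  have hY1ne : Y1.Nonempty := by
    by_contra h
    rw [Set.not_nonempty_iff_eq_empty] at h
    subst h
    have := hY1 0
    simp at this
  have hK0 : IsCompact Y0 := hY0c.isCompact
  have hK1 : IsCompact Y1 := hY1c.isCompact
  -- F1 y = sup_{x ∈ Y0} H (x, y)
  set F1 : C(M1, ℝ) := ⟨fun y => sSup ((fun x => H (x, y)) '' Y0),
    hK0.continuous_sSup (f := fun y x => H (x, y))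
      (H.continuous.comp (continuous_snd.prodMk continuous_fst))⟩ with hF1def
  have hF1ge : ∀ x ∈ Y0, ∀ y, H (x, y) ≤ F1 y := by
    intro x hx y
    exact le_csSup (hK0.bddAbove_image
      (H.continuous.comp (continuous_id.prodMk continuous_const)).continuousOn)
      (Set.mem_image_of_mem _ hx)
  -- F0 x = sup_{y} (H (x, y) - F1 y)
  set F0 : C(M0, ℝ) := ⟨fun x => sSup ((fun y => H (x, y) - F1 y) '' Set.univ),
    isCompact_univ.continuous_sSup (f := fun x y => H (x, y) - F1 y)
      ((H.continuous.comp (continuous_fst.prodMk continuous_snd)).sub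
        (F1.continuous.comp continuous_snd))⟩ with hF0def
  have hb0 : ∀ x : M0, BddAbove ((fun y => H (x, y) - F1 y) '' Set.univ) := fun x =>
    isCompact_univ.bddAbove_image
      ((H.continuous.comp (continuous_const.prodMk continuous_id)).sub
        F1.continuous).continuousOn
  have hHle : ∀ x y, H (x, y) ≤ F0 x + F1 y := by
    intro x y
    have : H (x, y) - F1 y ≤ F0 x :=
      le_csSup (hb0 x) (Set.mem_image_of_mem _ (Set.mem_univ y))
    linarith
  -- ζ H ≤ ζ0 F0 + ζ1 F1
  have hmain : ζ H ≤ ζ0 F0 + ζ1 F1 := by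
    rw [← hsplit F0 F1]
    apply hmono
    intro p
    exact hHle p.1 p.2
  -- ζ0 F0 ≤ 0
  have hF0le : ∀ x ∈ Y0, F0 x ≤ 0 := by
    intro x hx
    apply csSup_le (Set.univ_nonempty.image _)
    rintro r ⟨y, -, rfl⟩
    have := hF1ge x hx y
    show H (x, y) - F1 y ≤ 0
    linarith
  have hz0 : ζ0 F0 ≤ 0 := by
    have h1 := hY0 F0
    have h2 : (⨆ p : Y0, ((F0 p : ℝ) : EReal)) ≤ ((0 : ℝ) : EReal) := by
      apply iSup_le
      rintro ⟨x, hx⟩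
      exact_mod_cast hF0le x hx
    have := le_trans h1 h2
    exact_mod_cast this
  -- maximum of F1 on Y1
  obtain ⟨y, hyY1, hymax⟩ := hK1.exists_isMaxOn hY1ne F1.continuous.continuousOn
  have hz1 : ζ1 F1 ≤ F1 y := by
    have h1 := hY1 F1
    have h2 : (⨆ p : Y1, ((F1 p : ℝ) : EReal)) ≤ ((F1 y : ℝ) : EReal) := by
      apply iSup_le
      rintro ⟨y', hy'⟩
      exact_mod_cast hymax hy'
    have := le_trans h1 h2
    exact_mod_cast this
  -- maximum of H (·, y) on Y0
  obtain ⟨x, hxY0, hxmax⟩ := hK0.exists_isMaxOn hY0ne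
    (H.continuous.comp (continuous_id.prodMk continuous_const)).continuousOn
  have hF1y : F1 y ≤ H (x, y) := by
    apply csSup_le (hY0ne.image _)
    rintro r ⟨x', hx', rfl⟩
    exact hxmax hx'
  have hfinal : ζ H ≤ H (x, y) := by linarith
  calc (ζ H : EReal) ≤ ((H (x, y) : ℝ) : EReal) := by exact_mod_cast hfinal
    _ ≤ ⨆ p : ↥(Y0 ×ˢ Y1), ((H p : ℝ) : EReal) :=
        le_iSup (fun p : ↥(Y0 ×ˢ Y1) => ((H p : ℝ) : EReal))
          ⟨(x, y), Set.mk_mem_prod hxY0 hyY1⟩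
end

section
/- (Usher finiteness, special case) Let (C, δ, v) be a chain complex of Λ-modules over the downward Novikov field Λ, where C is a finitely generated free Λ-module with basis x₁,…,x_N, v is the valuation v(Σ λᵢ xᵢ) = max_i (v_q(λᵢ) + Aᵢ) for fixed real numbers Aᵢ, and δ is v-nonincreasing. Then for every nonzero homology class a, the spectral number c(a) = inf{ v(X) : [X] = a } is finite (> -∞) and the infimum is attained, i.e. there exists a cycle X representing a with v(X) = c(a). -/
/-!
The Novikov field is spherically complete: if successive terms of a sequence lie in shrinking
balls, some point lies in all of them, because each coefficient of the terms eventually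
stabilises. So if a subspace has an orthogonal basis (one in which the valuation is the maximum
over the coordinates), a minimizing sequence for the distance from a point to the subspace has a
limit in it, and the distance is attained. Gram–Schmidt, built on these best approximations,
gives every finitely generated subspace an orthogonal basis, in particular the boundaries
`range δ`. The spectral number of `[Z]` is then the valuation of a best representative
`Z + δ Y₀`, and it is finite because `Z ∉ range δ`.
-/

/-- The downward universal Novikov ring over `R`: formal sums `Σ aᵢ q^{wᵢ}` with
`wᵢ → -∞`, modelled as Hahn series over `ℝᵒᵈ`. -/
noncomputable abbrev Novikov (R : Type*) [Zero R] : Type _ := HahnSeries ℝᵒᵈ R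

/-- The valuation `v_q` on the downward Novikov ring: the supremum of the exponents
appearing with nonzero coefficient, with `v_q 0 = ⊥` (i.e. `-∞`). -/
noncomputable def vq {R : Type*} [Zero R] (x : Novikov R) : WithBot ℝ :=
  letI := Classical.dec (x = 0)
  if x = 0 then ⊥ else ((OrderDual.ofDual x.order : ℝ) : WithBot ℝ)

/-- The valuation `v_q` with values in `EReal` (`v_q 0 = -∞`). -/
noncomputable def vqE {R : Type*} [Zero R] (x : Novikov R) : EReal :=
  letI := Classical.dec (x = 0)
  if x = 0 then ⊥ else ((OrderDual.ofDual x.order : ℝ) : EReal)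

/-- The valuation on a finitely generated free module over the Novikov ring, with
fixed action values `A i` of the basis elements. -/
noncomputable def chainVal {R : Type*} [Zero R] {N : ℕ} (A : Fin N → ℝ)
    (X : Fin N → Novikov R) : EReal :=
  ⨆ i : Fin N, (vqE (X i) + ((A i : ℝ) : EReal))

open OrderDual

section Valuation

variable {R : Type*}

@[simp]
theorem vqE_zero [Zero R] : vqE (0 : Novikov R) = ⊥ := by
  simp [vqE]

theorem vqE_of_ne_zero [Zero R] {x : Novikov R} (hx : x ≠ 0) :
    vqE x = (ofDual x.order : ℝ) := by
  simp [vqE, hx]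

theorem vqE_ne_top [Zero R] (x : Novikov R) : vqE x ≠ ⊤ := by
  by_cases hx : x = 0 <;> simp [vqE, hx]

@[simp]
theorem vqE_eq_bot_iff [Zero R] {x : Novikov R} : vqE x = ⊥ ↔ x = 0 := by
  by_cases hx : x = 0 <;> simp [vqE, hx]

theorem vqE_le_iff [Zero R] {x : Novikov R} {ρ : EReal} :
    vqE x ≤ ρ ↔ ∀ g : ℝ, ρ < g → x.coeff (toDual g) = 0 := by
  by_cases hx : x = 0
  · simp [hx]
  rw [vqE_of_ne_zero hx]
  refine ⟨fun h g hg => HahnSeries.coeff_eq_zero_of_lt_order ?_, fun h => ?_⟩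
  · exact EReal.coe_lt_coe_iff.1 (h.trans_lt hg)
  · by_contra! hlt
    exact hx (HahnSeries.coeff_order_eq_zero.1 (h _ hlt))

theorem vqE_add_le [AddMonoid R] (x y : Novikov R) : vqE (x + y) ≤ max (vqE x) (vqE y) := by
  refine vqE_le_iff.2 fun g hg => ?_
  rw [HahnSeries.coeff_add, vqE_le_iff.1 (le_max_left _ _) g hg,
    vqE_le_iff.1 (le_max_right _ _) g hg, add_zero]

@[simp]
theorem vqE_neg [AddGroup R] (x : Novikov R) : vqE (-x) = vqE x := by
  rw [vqE, vqE, neg_eq_zero, HahnSeries.order_neg]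

theorem vqE_mul [Ring R] [NoZeroDivisors R] (x y : Novikov R) :
    vqE (x * y) = vqE x + vqE y := by
  by_cases hx : x = 0
  · simp [hx]
  by_cases hy : y = 0
  · simp [hy]
  rw [vqE_of_ne_zero hx, vqE_of_ne_zero hy, vqE_of_ne_zero (mul_ne_zero hx hy),
    HahnSeries.order_mul hx hy, ← EReal.coe_add, ofDual_add]

@[simp]
theorem vqE_one [Ring R] [Nontrivial R] : vqE (1 : Novikov R) = 0 := by
  rw [vqE_of_ne_zero one_ne_zero, HahnSeries.order_one]
  rfl

theorem exists_forall_vqE_sub_le [AddGroup R] (μ : ℕ → Novikov R) (ρ : ℕ → EReal)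
    (h : ∀ n k, n ≤ k → vqE (μ k - μ n) ≤ ρ n) :
    ∃ x : Novikov R, ∀ n, vqE (x - μ n) ≤ ρ n := by
  classical
  have stable : ∀ {n k : ℕ} {g : ℝ}, n ≤ k → ρ n < g →
      (μ k).coeff (toDual g) = (μ n).coeff (toDual g) :=
    fun hnk hg => sub_eq_zero.1 (by simpa using vqE_le_iff.1 (h _ _ hnk) _ hg)
  -- the coefficient at `g` is read off from any `μ n` whose radius `ρ n` lies below `g`
  let F : ℝᵒᵈ → R := fun g =>
    if hg : ∃ n, ρ n < ofDual g then (μ (Nat.find hg)).coeff g else 0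
  have F_eq : ∀ {n : ℕ} {g : ℝ}, ρ n < g → F (toDual g) = (μ n).coeff (toDual g) := by
    intro n g hg
    have hex : ∃ n, ρ n < ofDual (toDual g) := ⟨n, hg⟩
    simp only [F, dif_pos hex]
    exact (stable (Nat.find_min' hex hg) (Nat.find_spec hex)).symm
  have hF : (Function.support F).IsPWO := by
    refine Set.IsWF.isPWO (Set.isWF_iff_no_descending_seq.2 fun f hf hmem => ?_)
    obtain ⟨n, hn⟩ : ∃ n, ρ n < ofDual (f 0) := by
      by_contra hc
      exact hmem 0 (dif_neg hc)
    refine Set.isWF_iff_no_descending_seq.1 (μ n).isPWO_support.isWF f hf fun k => ?_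
    rw [HahnSeries.mem_support]
    exact (F_eq (g := ofDual (f k))
      (hn.trans_le (EReal.coe_le_coe_iff.2 (hf.antitone (Nat.zero_le k))))) ▸ hmem k
  refine ⟨⟨F, hF⟩, fun n => vqE_le_iff.2 fun g hg => ?_⟩
  rw [HahnSeries.coeff_sub, sub_eq_zero]
  exact F_eq hg

end Valuation

section ChainValuation

variable {R : Type*} {N : ℕ} (A : Fin N → ℝ)

theorem chainVal_le_iff [Zero R] {X : Fin N → Novikov R} {ρ : EReal} :
    chainVal A X ≤ ρ ↔ ∀ i, vqE (X i) + A i ≤ ρ :=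
  iSup_le_iff

theorem le_chainVal [Zero R] (X : Fin N → Novikov R) (i : Fin N) :
    vqE (X i) + A i ≤ chainVal A X :=
  le_iSup (fun i => vqE (X i) + A i) i

variable [AddGroup R]

@[simp]
theorem chainVal_eq_bot_iff {X : Fin N → Novikov R} : chainVal A X = ⊥ ↔ X = 0 := by
  simp_rw [← le_bot_iff, chainVal_le_iff, le_bot_iff, EReal.add_eq_bot_iff, vqE_eq_bot_iff,
    EReal.coe_ne_bot, or_false, funext_iff, Pi.zero_apply]

@[simp]
theorem chainVal_zero : chainVal A (0 : Fin N → Novikov R) = ⊥ :=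
  (chainVal_eq_bot_iff A).2 rfl

theorem chainVal_lt_top (X : Fin N → Novikov R) : chainVal A X < ⊤ := by
  rw [chainVal, ← Finset.sup_univ_eq_iSup, Finset.sup_lt_iff bot_lt_top]
  exact fun i _ => EReal.add_lt_top (vqE_ne_top _) (EReal.coe_ne_top _)

theorem chainVal_add_le (X Y : Fin N → Novikov R) :
    chainVal A (X + Y) ≤ max (chainVal A X) (chainVal A Y) := by
  refine (chainVal_le_iff A).2 fun i => ?_
  calc vqE (X i + Y i) + A i ≤ max (vqE (X i)) (vqE (Y i)) + A i := by
        gcongr; exact vqE_add_le _ _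
    _ = max (vqE (X i) + A i) (vqE (Y i) + A i) := (max_add_add_right _ _ _).symm
    _ ≤ max (chainVal A X) (chainVal A Y) := max_le_max (le_chainVal A X i) (le_chainVal A Y i)

@[simp]
theorem chainVal_neg (X : Fin N → Novikov R) : chainVal A (-X) = chainVal A X := by
  simp only [chainVal, Pi.neg_apply, vqE_neg]

theorem chainVal_sub_le (X Y : Fin N → Novikov R) :
    chainVal A (X - Y) ≤ max (chainVal A X) (chainVal A Y) := by
  simpa [sub_eq_add_neg] using chainVal_add_le A X (-Y)

theorem chainVal_add_eq_max_of_le {X Y : Fin N → Novikov R}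
    (h : chainVal A X ≤ chainVal A (X + Y)) :
    chainVal A (X + Y) = max (chainVal A X) (chainVal A Y) := by
  refine le_antisymm (chainVal_add_le A X Y) (max_le h ?_)
  have := chainVal_add_le A (-X) (X + Y)
  rwa [neg_add_cancel_left, chainVal_neg, max_eq_right h] at this

theorem exists_forall_chainVal_sub_le (μ : ℕ → Fin N → Novikov R) (ρ : ℕ → EReal)
    (h : ∀ n k, n ≤ k → chainVal A (μ k - μ n) ≤ ρ n) :
    ∃ X : Fin N → Novikov R, ∀ n, chainVal A (X - μ n) ≤ ρ n := by
  have shift : ∀ (x : Novikov R) (a : ℝ) (r : EReal), vqE x ≤ r - a ↔ vqE x + a ≤ r :=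
    fun _ _ _ => EReal.le_sub_iff_add_le (.inl (EReal.coe_ne_bot _)) (.inl (EReal.coe_ne_top _))
  choose X hX using fun i => exists_forall_vqE_sub_le (fun n => μ n i) (fun n => ρ n - A i)
    fun n k hnk => (shift _ _ _).2 ((chainVal_le_iff A).1 (h n k hnk) i)
  exact ⟨X, fun n => (chainVal_le_iff A).2 fun i => (shift _ _ _).1 (hX i n)⟩

end ChainValuation

theorem chainVal_succ {R : Type*} [Zero R] {m : ℕ} (A : Fin (m + 1) → ℝ)
    (X : Fin (m + 1) → Novikov R) :
    chainVal A X = max (vqE (X 0) + A 0) (chainVal (Fin.tail A) (Fin.tail X)) := by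
  refine le_antisymm ((chainVal_le_iff A).2 (Fin.cases (le_max_left _ _) fun i => ?_))
    (max_le (le_chainVal A X 0) ((chainVal_le_iff _).2 fun i => le_chainVal A X i.succ))
  exact le_max_of_le_right (le_chainVal (Fin.tail A) (Fin.tail X) i)

theorem chainVal_smul {K : Type*} [Field K] {N : ℕ} (A : Fin N → ℝ) (c : Novikov K)
    (X : Fin N → Novikov K) : chainVal A (c • X) = vqE c + chainVal A X := by
  have smul_le : ∀ (c : Novikov K) (X : Fin N → Novikov K),
      chainVal A (c • X) ≤ vqE c + chainVal A X :=
    fun c X => (chainVal_le_iff A).2 fun i => by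
      rw [Pi.smul_apply, smul_eq_mul, vqE_mul, add_assoc]
      gcongr
      exact le_chainVal A X i
  refine le_antisymm (smul_le c X) ?_
  by_cases hc : c = 0
  · simp [hc]
  calc vqE c + chainVal A X = vqE c + chainVal A (c⁻¹ • c • X) := by rw [inv_smul_smul₀ hc]
    _ ≤ vqE c + (vqE c⁻¹ + chainVal A (c • X)) := by gcongr; exact smul_le _ _
    _ = chainVal A (c • X) := by
      rw [← add_assoc, ← vqE_mul, mul_inv_cancel₀ hc, vqE_one, zero_add]

theorem exists_forall_chainVal_add_le_of_isometry {R : Type*} [AddCommGroup R] {m N : ℕ}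
    {A : Fin N → ℝ} {B : Fin m → ℝ} (f : (Fin m → Novikov R) →+ (Fin N → Novikov R))
    (hf : ∀ c, chainVal A (f c) = chainVal B c) (Z : Fin N → Novikov R) :
    ∃ c₀, ∀ c, chainVal A (Z + f c₀) ≤ chainVal A (Z + f c) := by
  obtain ⟨ρ, hρ_anti, -, hρ_lim, hρ_mem⟩ :=
    (isGLB_iInf (f := fun c => chainVal A (Z + f c))).exists_seq_antitone_tendsto
      (Set.range_nonempty _)
  choose c hc using hρ_mem
  -- the minimizing sequence is Cauchy in the model space, whose balls have a common point
  obtain ⟨c₀, hc₀⟩ := exists_forall_chainVal_sub_le B c ρ fun n k hnk => by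
    rw [← hf, map_sub, ← add_sub_add_left_eq_sub _ _ Z]
    exact (chainVal_sub_le A _ _).trans (max_le ((hc k).le.trans (hρ_anti hnk)) (hc n).le)
  refine ⟨c₀, fun c' => le_trans ?_ (iInf_le (fun c => chainVal A (Z + f c)) c')⟩
  refine ge_of_tendsto' hρ_lim fun n => ?_
  have : Z + f c₀ = (Z + f (c n)) + f (c₀ - c n) := by rw [map_sub]; abel
  rw [this]
  exact (chainVal_add_le A _ _).trans (max_le (hc n).le (hf _ ▸ hc₀ n))

theorem Submodule.span_singleton_add_sup {R M : Type*} [Ring R] [AddCommGroup M] [Module R M]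
    {W : Submodule R M} {w : M} (hw : w ∈ W) (x : M) : R ∙ (x + w) ⊔ W = R ∙ x ⊔ W := by
  have key : ∀ x w, w ∈ W → R ∙ (x + w) ≤ R ∙ x ⊔ W := fun x w hw =>
    (span_singleton_le_iff_mem _ _).2 (add_mem_sup (mem_span_singleton_self x) hw)
  refine le_antisymm (sup_le (key x w hw) le_sup_right) (sup_le ?_ le_sup_right)
  simpa using key (x + w) (-w) (W.neg_mem hw)

section Orthogonalizable

variable {K : Type*} [Field K] {N : ℕ} (A : Fin N → ℝ)

/-- `W` is spanned by a family `u` that is orthogonal in Usher's sense: the valuation of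
`∑ j, c j • u j` is `max_j (v_q (c j) + B j)`. -/
def Orthogonalizable (W : Submodule (Novikov K) (Fin N → Novikov K)) : Prop :=
  ∃ (m : ℕ) (u : Fin m → Fin N → Novikov K) (B : Fin m → ℝ),
    Submodule.span (Novikov K) (Set.range u) = W ∧
      ∀ c : Fin m → Novikov K, chainVal A (∑ j, c j • u j) = chainVal B c

variable {A} {W : Submodule (Novikov K) (Fin N → Novikov K)}

theorem Orthogonalizable.exists_forall_chainVal_add_le (hW : Orthogonalizable A W)
    (x : Fin N → Novikov K) :
    ∃ w ∈ W, ∀ w' ∈ W, chainVal A (x + w) ≤ chainVal A (x + w') := by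
  obtain ⟨m, u, B, rfl, hu⟩ := hW
  let f := Fintype.linearCombination (Novikov K) u
  obtain ⟨c₀, hc₀⟩ := exists_forall_chainVal_add_le_of_isometry f.toAddMonoidHom
    (by simpa [f, Fintype.linearCombination_apply] using hu) x
  rw [← Fintype.range_linearCombination]
  exact ⟨f c₀, ⟨c₀, rfl⟩, fun _ ⟨c, hc⟩ => hc ▸ hc₀ c⟩

theorem chainVal_smul_le_smul_add {y : Fin N → Novikov K}
    (hy : ∀ w ∈ W, chainVal A y ≤ chainVal A (y + w)) (c : Novikov K)
    {w : Fin N → Novikov K} (hw : w ∈ W) :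
    chainVal A (c • y) ≤ chainVal A (c • y + w) := by
  by_cases hc : c = 0
  · simp [hc]
  rw [← smul_inv_smul₀ hc w, ← smul_add, chainVal_smul, chainVal_smul]
  gcongr
  exact hy _ (W.smul_mem _ hw)

theorem Orthogonalizable.span_singleton_sup (hW : Orthogonalizable A W)
    (x : Fin N → Novikov K) : Orthogonalizable A (Novikov K ∙ x ⊔ W) := by
  obtain ⟨w, hw, hmin⟩ := hW.exists_forall_chainVal_add_le x
  rw [← Submodule.span_singleton_add_sup hw]
  by_cases hy0 : x + w = 0
  · rwa [hy0, Submodule.span_singleton_eq_bot.2 rfl, bot_sup_eq]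
  have hy : ∀ w' ∈ W, chainVal A (x + w) ≤ chainVal A (x + w + w') := fun w' hw' => by
    rw [add_assoc]; exact hmin _ (W.add_mem hw hw')
  obtain ⟨m, u, B, rfl, hu⟩ := hW
  refine ⟨m + 1, Fin.cons (x + w) u, Fin.cons (chainVal A (x + w)).toReal B,
    by rw [Fin.range_cons, Submodule.span_insert], fun c => ?_⟩
  have hsum : ∑ j, c j.succ • u j ∈ Submodule.span (Novikov K) (Set.range u) :=
    Submodule.sum_mem _ fun j _ => Submodule.smul_mem _ _ (Submodule.subset_span ⟨j, rfl⟩)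
  rw [Fin.sum_univ_succ, chainVal_succ]
  simp only [Fin.cons_zero, Fin.cons_succ, Fin.tail_cons]
  rw [chainVal_add_eq_max_of_le A (chainVal_smul_le_smul_add hy _ hsum), chainVal_smul,
    EReal.coe_toReal (chainVal_lt_top A _).ne (by simpa using hy0)]
  congr 1
  exact hu (Fin.tail c)

theorem Orthogonalizable.bot :
    Orthogonalizable A (⊥ : Submodule (Novikov K) (Fin N → Novikov K)) :=
  ⟨0, Fin.elim0, Fin.elim0, by simp, fun c => by simp [chainVal]⟩

theorem Orthogonalizable.of_fg (hW : W.FG) : Orthogonalizable A W := by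
  classical
  obtain ⟨s, rfl⟩ := hW
  induction s using Finset.induction_on with
  | empty => simpa using Orthogonalizable.bot
  | insert x s _ ih => simpa [Submodule.span_insert] using ih.span_singleton_sup x

end Orthogonalizable

theorem usher_finiteness_spectrality_general
    (K : Type*) [Field K] (N : ℕ) (A : Fin N → ℝ)
    (δ : (Fin N → Novikov K) →ₗ[Novikov K] (Fin N → Novikov K))
    (Z : Fin N → Novikov K) (hnz : ∀ Y, Z ≠ δ Y) :
    (⨅ Y : Fin N → Novikov K, chainVal A (Z + δ Y)) ≠ (⊥ : EReal) ∧
    ∃ Y : Fin N → Novikov K,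
      chainVal A (Z + δ Y) = ⨅ Y' : Fin N → Novikov K, chainVal A (Z + δ Y') := by
  obtain ⟨_, ⟨Y₀, rfl⟩, hmin⟩ :=
    (Orthogonalizable.of_fg (A := A) (Submodule.fg_range δ)).exists_forall_chainVal_add_le Z
  have hY₀ : chainVal A (Z + δ Y₀) = ⨅ Y, chainVal A (Z + δ Y) :=
    le_antisymm (le_iInf fun Y => hmin _ ⟨Y, rfl⟩) (iInf_le _ Y₀)
  refine ⟨?_, Y₀, hY₀⟩
  rw [← hY₀, Ne, chainVal_eq_bot_iff, add_eq_zero_iff_eq_neg, ← map_neg]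
  exact hnz (-Y₀)

/-- Usher finiteness and spectrality (special case): for a finitely generated free
filtered complex over the downward Novikov field, the spectral number of every nonzero
homology class is finite (`≠ -∞`), and the infimum over representing cycles is
attained. -/
theorem usher_finiteness_spectrality
    (K : Type*) [Field K] (N : ℕ) (A : Fin N → ℝ)
    (δ : (Fin N → Novikov K) →ₗ[Novikov K] (Fin N → Novikov K))
    (hδ2 : ∀ X, δ (δ X) = 0)
    (hfilt : ∀ X, chainVal A (δ X) ≤ chainVal A X)
    (Z : Fin N → Novikov K) (hZ : δ Z = 0) (hnz : ∀ Y, Z ≠ δ Y) :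
    (⨅ Y : Fin N → Novikov K, chainVal A (Z + δ Y)) ≠ (⊥ : EReal) ∧
    ∃ Y : Fin N → Novikov K,
      chainVal A (Z + δ Y) = ⨅ Y' : Fin N → Novikov K, chainVal A (Z + δ Y') :=
  usher_finiteness_spectrality_general K N A δ Z hnz
end
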